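/- With notation as in the isomorphism P between ℚ∧^r_{ℤ[G]}M and ℚ(M,G)_⋆^r: the map Q : ℚ(M,G)_⋆^r → ℚ∧^r_{ℤ[G]}M defined as the restriction of Q̄(m_1⊗⋯⊗m_r⊗[σ]) = (1/((#G)^r · r!)) m_1∧⋯∧m_{r-1}∧(σ·m_r) satisfies Q ∘ P = id on ℚ∧^r_{ℤ[G]}M. -/

import Mathlib

/-!
Under `Q`, every summand of `P (m_1 ∧ ⋯ ∧ m_r)` becomes `((#G)^r r!)⁻¹ m_1 ∧ ⋯ ∧ m_r`: the
scalars `σ_j⁻¹` pulled out of the wedge multiply to `(∏ σ_j)⁻¹`, which the twist by `∏ σ_j` in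
the last slot cancels, and reordering the `m_{f(j)}` produces `sgn f` once more. Summing the
`r! (#G)^r` equal terms gives the identity on generators. Since `a • (m_1 ∧ ⋯) = (a m_1) ∧ ⋯`,
the generators span `⋀^r M` already over `ℤ`, so `Q ∘ P = id` on `ℚ ⊗ ⋀^r M`.
-/

open MonoidAlgebra TensorProduct

/-- The generator `m_1 ∧ ⋯ ∧ m_r` of the `r`-th exterior power `⋀[R]^r M`. -/
noncomputable def wedgeGen {R M : Type*} [CommRing R] [AddCommGroup M] [Module R M]
    (r : ℕ) (m : Fin r → M) : ⋀[R]^r M :=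
  ⟨ExteriorAlgebra.ιMulti R r m, ExteriorAlgebra.ιMulti_range R r (Set.mem_range_self m)⟩

open scoped Pointwise in
theorem Submodule.span_int_eq_top_of_smul_mem {R M : Type*} [Ring R] [AddCommGroup M]
    [Module R M] {s : Set M} (hs : span R s = ⊤) (hsmul : ∀ (a : R), ∀ x ∈ s, a • x ∈ s) :
    span ℤ s = ⊤ := by
  have hclosure : AddSubmonoid.closure ((Set.univ : Set R) • s) = ⊤ := by
    rw [← span_eq_closure, hs, top_toAddSubmonoid]
  rw [eq_top_iff, ← toAddSubmonoid_le, top_toAddSubmonoid, ← hclosure, AddSubmonoid.closure_le]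
  rintro _ ⟨a, -, x, hx, rfl⟩
  exact subset_span (hsmul a x hx)

section wedgeGen

variable {R M : Type*} [CommRing R] [AddCommGroup M] [Module R M] {r : ℕ}

theorem wedgeGen_eq_ιMulti (m : Fin r → M) :
    wedgeGen (R := R) r m = exteriorPower.ιMulti R r m := rfl

theorem wedgeGen_update_smul_self (m : Fin r → M) (i : Fin r) (c : R) :
    wedgeGen (R := R) r (Function.update m i (c • m i)) = c • wedgeGen (R := R) r m := by
  simp only [wedgeGen_eq_ιMulti, AlternatingMap.map_update_smul, Function.update_eq_self]

theorem wedgeGen_smul_univ (c : Fin r → R) (m : Fin r → M) :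
    wedgeGen (R := R) r (fun j => c j • m j) = (∏ j, c j) • wedgeGen (R := R) r m :=
  (exteriorPower.ιMulti R r).toMultilinearMap.map_smul_univ c m

theorem wedgeGen_comp_perm (m : Fin r → M) (f : Equiv.Perm (Fin r)) :
    wedgeGen (R := R) r (m ∘ f) = (Equiv.Perm.sign f : ℤ) • wedgeGen (R := R) r m := by
  rw [wedgeGen_eq_ιMulti, AlternatingMap.map_perm, Units.smul_def]; rfl

theorem span_int_range_wedgeGen (hr : 0 < r) :
    Submodule.span ℤ (Set.range (wedgeGen (R := R) (M := M) r)) = ⊤ := by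
  refine Submodule.span_int_eq_top_of_smul_mem (R := R) (exteriorPower.ιMulti_span R r M) ?_
  rintro a _ ⟨m, rfl⟩
  exact ⟨_, wedgeGen_update_smul_self m ⟨0, hr⟩ a⟩

end wedgeGen

theorem wedgeGen_update_prod_smul_inv_smul_comp {k G M : Type*} [CommRing k] [CommGroup G]
    [AddCommGroup M] [Module (MonoidAlgebra k G) M] {r : ℕ}
    (σ : Fin r → G) (f : Equiv.Perm (Fin r)) (m : Fin r → M) (i : Fin r) :
    wedgeGen (R := MonoidAlgebra k G) r
        (Function.update (fun j => of k G (σ j)⁻¹ • m (f j)) i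
          (of k G (∏ j, σ j) • (of k G (σ i)⁻¹ • m (f i)))) =
      (Equiv.Perm.sign f : ℤ) • wedgeGen (R := MonoidAlgebra k G) r m := by
  have hprod : of k G (∏ j, σ j) * ∏ j, of k G (σ j)⁻¹ = 1 := by
    rw [← map_prod, ← map_mul, Finset.prod_inv_distrib, mul_inv_cancel, map_one]
  rw [wedgeGen_update_smul_self (fun j => of k G (σ j)⁻¹ • m (f j)),
    show (fun j => of k G (σ j)⁻¹ • m (f j)) = fun j => of k G (σ j)⁻¹ • (m ∘ f) j from rfl,
    wedgeGen_smul_univ, smul_smul, hprod, one_smul, wedgeGen_comp_perm]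

/-- with `P(m_1∧⋯∧m_r) = Σ_f sgn(f) ⊗_j (Σ_σ σ⁻¹m_{f(j)}[σ])` and
`Q̄(m_1⊗⋯⊗m_r⊗[τ]) = (1/((#G)^r·r!)) m_1∧⋯∧m_{r-1}∧(τ·m_r)`, the composite `Q̄ ∘ P` is the
identity on `ℚ ∧^r_{ℤ[G]} M`. -/
theorem stmt9 (G : Type) [CommGroup G] [Fintype G]
    (M : Type) [AddCommGroup M] [Module (MonoidAlgebra ℤ G) M]
    (r : ℕ) (hr : 0 < r)
    (P : (ℚ ⊗[ℤ] (↥(⋀[MonoidAlgebra ℤ G]^r M))) →ₗ[ℚ]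
      (ℚ ⊗[ℤ] ((G →₀ (⨂[ℤ] (_ : Fin r), M)))))
    (hP : ∀ m : Fin r → M,
      P ((1 : ℚ) ⊗ₜ[ℤ] wedgeGen (R := MonoidAlgebra ℤ G) r m) =
        ∑ f : Equiv.Perm (Fin r), ∑ σ : Fin r → G,
          ((Equiv.Perm.sign f : ℤ) •
            ((1 : ℚ) ⊗ₜ[ℤ] (Finsupp.single (∏ j, σ j)
              (PiTensorProduct.tprod ℤ
                (fun j => (MonoidAlgebra.of ℤ G (σ j)⁻¹) • m (f j)))))))
    (Q : (ℚ ⊗[ℤ] ((G →₀ (⨂[ℤ] (_ : Fin r), M)))) →ₗ[ℚ]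
      (ℚ ⊗[ℤ] (↥(⋀[MonoidAlgebra ℤ G]^r M))))
    (hQ : ∀ (τ : G) (m : Fin r → M),
      Q ((1 : ℚ) ⊗ₜ[ℤ] Finsupp.single τ (PiTensorProduct.tprod ℤ m)) =
        (((Fintype.card G : ℚ) ^ r * (r.factorial : ℚ))⁻¹) •
          ((1 : ℚ) ⊗ₜ[ℤ] wedgeGen (R := MonoidAlgebra ℤ G) r
            (Function.update m ⟨r - 1, by omega⟩
              ((MonoidAlgebra.of ℤ G τ) • m ⟨r - 1, by omega⟩)))) :
    ∀ x : ℚ ⊗[ℤ] (↥(⋀[MonoidAlgebra ℤ G]^r M)), Q (P x) = x := by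
  have hcard : (Fintype.card (Equiv.Perm (Fin r)) : ℚ) * ((Fintype.card (Fin r → G) : ℚ) *
      ((Fintype.card G : ℚ) ^ r * (r.factorial : ℚ))⁻¹) = 1 := by
    have : (Fintype.card G : ℚ) ≠ 0 := Nat.cast_ne_zero.mpr Fintype.card_ne_zero
    rw [Fintype.card_perm, Fintype.card_fun, Fintype.card_fin]
    push_cast
    field_simp
  have hgen : ∀ m : Fin r → M,
      Q (P ((1 : ℚ) ⊗ₜ[ℤ] wedgeGen r m)) = (1 : ℚ) ⊗ₜ[ℤ] wedgeGen r m := by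
    intro m
    have hsign : ∀ (u : ℤˣ) (q : ℚ),
        (u : ℤ) • q • (1 : ℚ) ⊗ₜ[ℤ] ((u : ℤ) • wedgeGen (R := ℤ[G]) r m) =
          q • (1 : ℚ) ⊗ₜ[ℤ] wedgeGen r m := by
      intro u q
      rw [tmul_smul, smul_comm _ q, smul_smul, ← Units.val_mul, Int.units_mul_self, Units.val_one,
        one_smul]
    simp only [hP, map_sum, map_zsmul, hQ, wedgeGen_update_prod_smul_inv_smul_comp]
    simp only [hsign, Finset.sum_const, Finset.card_univ, ← Nat.cast_smul_eq_nsmul ℚ, smul_smul,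
      hcard, one_smul]
  suffices Q ∘ₗ P = LinearMap.id from fun x => LinearMap.congr_fun this x
  refine TensorProduct.AlgebraTensorModule.curry_injective (LinearMap.ext_ring ?_)
  exact LinearMap.ext_on_range (span_int_range_wedgeGen hr) hgen
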